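/- arXiv:1211.3722 — 7 statements merged into one kernel-verified Lean document; each statement's English description precedes it below -/
import Mathlib

section
/- Let F_{ς₀}(V,E) = ({ς₀} ∪ V', E') where E' = {(ς,ς') | ς ∈ V and ς ↦ ς'} and V' = {ς' | (ς,ς') ∈ E'}. Then F_{ς₀} is monotone on ℘(State) × ℘(State × State) ordered componentwise by inclusion, and its least fixed point is exactly ({ς | ς₀ ↦* ς}, {(ς,ς') | ς₀ ↦* ς and ς ↦ ς'}), where ↦* is the reflexive–transitive closure of ↦. That is, the state component of the least fixed point is the set of states reachable from ς₀ and the edge component is the set of transitions out of reachable states. -/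
/-!
The transfer function only reads the state component, so a fixed point `(V, E)` is determined
by `V`, which must contain `ς₀` and be closed under `↦`; the least such set is the set of
states reachable from `ς₀`, and then `E` is forced to be the set of transitions out of it.
-/

open Relation

section TransferFunction

variable {α : Type*} (r : α → α → Prop) (a : α)

def transfer (p : Set α × Set (α × α)) : Set α × Set (α × α) :=
  ({a} ∪ {y | ∃ x ∈ p.1, r x y}, {e | e.1 ∈ p.1 ∧ r e.1 e.2})

def reachGraph : Set α × Set (α × α) :=
  ({x | ReflTransGen r a x}, {e | ReflTransGen r a e.1 ∧ r e.1 e.2})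

theorem transfer_mono : Monotone (transfer r a) := by
  rintro ⟨V₁, E₁⟩ ⟨V₂, E₂⟩ ⟨hV, -⟩
  refine ⟨Set.union_subset_union_right _ ?_, fun e he => ⟨hV he.1, he.2⟩⟩
  rintro y ⟨x, hx, hxy⟩
  exact ⟨x, hV hx, hxy⟩

theorem transfer_reachGraph : transfer r a (reachGraph r a) = reachGraph r a := by
  refine Prod.ext (Set.ext fun y => ⟨?_, fun hy => ?_⟩) rfl
  · rintro (rfl | ⟨x, hx, hxy⟩)
    exacts [ReflTransGen.refl, hx.tail hxy]
  · rcases hy.cases_tail with rfl | ⟨x, hx, hxy⟩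
    exacts [Or.inl rfl, Or.inr ⟨x, hx, hxy⟩]

theorem reachGraph_le_of_transfer_le {p : Set α × Set (α × α)} (hp : transfer r a p ≤ p) :
    reachGraph r a ≤ p := by
  have hV : ∀ x, ReflTransGen r a x → x ∈ p.1 := fun x hx => by
    induction hx with
    | refl => exact hp.1 (Or.inl rfl)
    | tail _ hyz ih => exact hp.1 (Or.inr ⟨_, ih, hyz⟩)
  exact ⟨hV, fun e ⟨he, hr⟩ => hp.2 ⟨hV _ he, hr⟩⟩

theorem isLeast_fixedPoints_transfer :
    IsLeast {p | transfer r a p = p} (reachGraph r a) :=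
  ⟨transfer_reachGraph r a, fun _ hp => reachGraph_le_of_transfer_le r a hp.le⟩

end TransferFunction

/-- The global transfer function `F ς₀ (V, E) = ({ς₀} ∪ V', E')` where
`E' = {(ς,ς') | ς ∈ V and ς ↦ ς'}` and `V' = {ς' | (ς,ς') ∈ E'}` is monotone on
`℘(State) × ℘(State × State)` (ordered componentwise by inclusion), and its least fixed
point is exactly the pair of the set of states reachable from `ς₀` and the set of
transitions out of reachable states. -/
theorem stmt_0 {State : Type*} (step : State → State → Prop) (ς₀ : State)
    (F : Set State × Set (State × State) → Set State × Set (State × State))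
    (hF : ∀ V : Set State, ∀ E : Set (State × State),
      F (V, E) = ({ς₀} ∪ {ς' | ∃ ς ∈ V, step ς ς'}, {p | p.1 ∈ V ∧ step p.1 p.2})) :
    Monotone F ∧
    IsLeast {p | F p = p}
      ({ς | Relation.ReflTransGen step ς₀ ς},
       {p | Relation.ReflTransGen step ς₀ p.1 ∧ step p.1 p.2}) := by
  obtain rfl : F = transfer step ς₀ := funext fun ⟨V, E⟩ => hF V E
  exact ⟨transfer_mono step ς₀, isLeast_fixedPoints_transfer step ς₀⟩
end

section
/- The frontier-based widened transfer function preserves the following invariant: if all stores occurring in the seen set S are totally ordered by ⊑ (form a chain) and σ is an upper bound of the stores occurring in S, and (S,F,σ) steps to (S ∪ S', F', σ'), then all stores occurring in S ∪ S' are totally ordered by ⊑ and σ' is an upper bound of the stores occurring in S ∪ S'. -/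
/-! The step only joins into the current store, so `σ ⊑ σ'`; the stores already seen stay below
`σ'`, and every newly seen pair carries exactly `σ'`, which is therefore comparable with all of
them. -/

/-- A store maps addresses to sets of values, ordered pointwise. -/
abbrev Store (Addr Value : Type*) := Addr → Set Value

/-- The frontier-based widened transfer function: given a seen set `S`, a frontier `F`
and a store `σ`, it produces `(S ∪ S', F', σ')` where
`I = {(c',σ^c) | c ∈ F, wn(c,σ) ↦ wn(c',σ^c)}`, `σ' = σ ⊔ ⨆{σ^c | (c',σ^c) ∈ I}`,
`F' = {c' | (c',σ^c) ∈ I and (c',σ') ∉ S}`, and `S' = {(c',σ') | c' ∈ F'}`. -/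
def Fstep {Addr Value Context : Type*}
    (step : Context × Store Addr Value → Context × Store Addr Value → Prop)
    (cfg : Set (Context × Store Addr Value) × Set Context × Store Addr Value) :
    Set (Context × Store Addr Value) × Set Context × Store Addr Value :=
  let S := cfg.1
  let F := cfg.2.1
  let σ := cfg.2.2
  let I : Set (Context × Store Addr Value) := {p | ∃ c ∈ F, step (c, σ) p}
  let σ' : Store Addr Value := fun a => σ a ∪ ⋃ p ∈ I, p.2 a
  let F' : Set Context := {c' | (∃ σc, (c', σc) ∈ I) ∧ (c', σ') ∉ S}
  (S ∪ {p | p.1 ∈ F' ∧ p.2 = σ'}, F', σ')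

theorem snd_chain_union_of_snd_eq {α β : Type*} [Preorder β] {S T : Set (α × β)} {b : β}
    (hchain : ∀ p ∈ S, ∀ q ∈ S, p.2 ≤ q.2 ∨ q.2 ≤ p.2) (hub : ∀ p ∈ S, p.2 ≤ b)
    (hT : ∀ p ∈ T, p.2 = b) :
    (∀ p ∈ S ∪ T, ∀ q ∈ S ∪ T, p.2 ≤ q.2 ∨ q.2 ≤ p.2) ∧ ∀ p ∈ S ∪ T, p.2 ≤ b := by
  have hub' : ∀ p ∈ S ∪ T, p.2 ≤ b := by
    rintro p (hp | hp)
    · exact hub p hp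
    · exact (hT p hp).le
  refine ⟨?_, hub'⟩
  rintro p hp q (hq | hq)
  · rcases hp with hp | hp
    · exact hchain p hp q hq
    · exact Or.inr (hT p hp ▸ hub q hq)
  · exact Or.inl (hT q hq ▸ hub' p hp)

section Fstep

variable {Addr Value Context : Type*}
  (step : Context × Store Addr Value → Context × Store Addr Value → Prop)
  (S : Set (Context × Store Addr Value)) (F : Set Context) (σ : Store Addr Value)

theorem le_Fstep_store : σ ≤ (Fstep step (S, F, σ)).2.2 :=
  fun _ => Set.subset_union_left

theorem Fstep_seen_eq :
    (Fstep step (S, F, σ)).1 =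
      S ∪ {p | p.1 ∈ (Fstep step (S, F, σ)).2.1 ∧ p.2 = (Fstep step (S, F, σ)).2.2} :=
  rfl

end Fstep

theorem stmt_2_general {Addr Value Context : Type*}
    (step : Context × Store Addr Value → Context × Store Addr Value → Prop)
    (S : Set (Context × Store Addr Value)) (F : Set Context) (σ : Store Addr Value)
    (hchain : ∀ p ∈ S, ∀ q ∈ S, p.2 ≤ q.2 ∨ q.2 ≤ p.2)
    (hub : ∀ p ∈ S, p.2 ≤ σ) :
    (∀ p ∈ (Fstep step (S, F, σ)).1, ∀ q ∈ (Fstep step (S, F, σ)).1,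
        p.2 ≤ q.2 ∨ q.2 ≤ p.2) ∧
    (∀ p ∈ (Fstep step (S, F, σ)).1, p.2 ≤ (Fstep step (S, F, σ)).2.2) := by
  rw [Fstep_seen_eq]
  exact snd_chain_union_of_snd_eq hchain
    (fun p hp => (hub p hp).trans (le_Fstep_store step S F σ)) fun _ hp => hp.2

/-- The frontier-based widened transfer function preserves the invariant
that all stores occurring in the seen set are totally ordered by `⊑` and that the
current store is an upper bound of them. -/
theorem stmt_2 {Addr Value Context : Type*}
    (step : Context × Store Addr Value → Context × Store Addr Value → Prop)
    (hext : ∀ c σ c' σ', step (c, σ) (c', σ') → σ ≤ σ')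
    (S : Set (Context × Store Addr Value)) (F : Set Context) (σ : Store Addr Value)
    (hchain : ∀ p ∈ S, ∀ q ∈ S, p.2 ≤ q.2 ∨ q.2 ≤ p.2)
    (hub : ∀ p ∈ S, p.2 ≤ σ) :
    (∀ p ∈ (Fstep step (S, F, σ)).1, ∀ q ∈ (Fstep step (S, F, σ)).1,
        p.2 ≤ q.2 ∨ q.2 ≤ p.2) ∧
    (∀ p ∈ (Fstep step (S, F, σ)).1, p.2 ≤ (Fstep step (S, F, σ)).2.2) :=
  stmt_2_general step S F σ hchain hub
end

section
/- The timestamped widened transfer function preserves the following invariant: if Σ is nonempty, strictly decreasing with respect to ⊐ from head to tail (each store strictly contains the next), and σ = head(Σ), and (Ŝ,F,σ,Σ,t) steps to (Ŝ ∪ Ŝ', F', σ', Σ', t'), then Σ' is nonempty, strictly decreasing with respect to ⊐ from head to tail, and σ' = head(Σ'). -/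
open Classical

/-- The timestamped widened transfer function: given seen contexts tagged with
timestamps `Ŝ`, a frontier `F`, a store `σ`, a stack of stores `Sg` and a timestamp `t`,
it produces `(Ŝ ∪ Ŝ', F', σ', Sg', t')` where
`I = {(c',σ^c) | c ∈ F, wn(c,σ) ↦ wn(c',σ^c)}`, `σ' = σ ⊔ ⨆{σ^c | (c',σ^c) ∈ I}`,
`(t',Sg') = (t+1, σ'::Sg)` if `σ' ≠ σ` and `(t,Sg)` otherwise,
`F' = {c' | (c',σ^c) ∈ I and (c',t') ∉ Ŝ}`, and `Ŝ' = {(c',t') | c' ∈ F'}`. -/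
noncomputable def Tstep {Addr Value Context : Type*}
    (step : Context × Store Addr Value → Context × Store Addr Value → Prop)
    (cfg : Set (Context × ℕ) × Set Context × Store Addr Value × List (Store Addr Value) × ℕ) :
    Set (Context × ℕ) × Set Context × Store Addr Value × List (Store Addr Value) × ℕ :=
  let Shat := cfg.1
  let F := cfg.2.1
  let σ := cfg.2.2.1
  let Sg := cfg.2.2.2.1
  let t := cfg.2.2.2.2
  let I : Set (Context × Store Addr Value) := {p | ∃ c ∈ F, step (c, σ) p}
  let σ' : Store Addr Value := fun a => σ a ∪ ⋃ p ∈ I, p.2 a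
  let t' : ℕ := if σ' = σ then t else t + 1
  let Sg' : List (Store Addr Value) := if σ' = σ then Sg else σ' :: Sg
  let F' : Set Context := {c' | (∃ σc, (c', σc) ∈ I) ∧ (c', t') ∉ Shat}
  (Shat ∪ {p | p.1 ∈ F' ∧ p.2 = t'}, F', σ', Sg', t')

/-
The new store is the join of the old store with the stores reached in one step, so it contains
the old store, which is the head of the stack. If the two are equal the stack is unchanged;
otherwise the new store strictly contains the head, so pushing it keeps the stack strictly
decreasing.
-/

section PushIfChanged

variable {α : Type*} {a b : α} {l : List α} [Decidable (b = a)]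

theorem List.head?_ite_cons (h : l.head? = some a) :
    (if b = a then l else b :: l).head? = some b := by
  split_ifs with hba
  · rw [h, hba]
  · rfl

theorem List.isChain_gt_ite_cons [PartialOrder α] (hab : a ≤ b)
    (hl : l.IsChain (fun x y => y < x)) (h : l.head? = some a) :
    (if b = a then l else b :: l).IsChain (fun x y => y < x) := by
  split_ifs with hba
  · exact hl
  · refine hl.cons fun y hy => ?_
    obtain rfl : a = y := by simpa [h] using hy
    exact lt_of_le_of_ne hab (Ne.symm hba)

end PushIfChanged

section Tstep

variable {Addr Value Context : Type*}
  (step : Context × Store Addr Value → Context × Store Addr Value → Prop)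
  (cfg : Set (Context × ℕ) × Set Context × Store Addr Value × List (Store Addr Value) × ℕ)

theorem le_Tstep_store : cfg.2.2.1 ≤ (Tstep step cfg).2.2.1 :=
  fun _ => Set.subset_union_left

theorem Tstep_stack : (Tstep step cfg).2.2.2.1 =
    if (Tstep step cfg).2.2.1 = cfg.2.2.1 then cfg.2.2.2.1
    else (Tstep step cfg).2.2.1 :: cfg.2.2.2.1 :=
  rfl

end Tstep

theorem stmt_3_general {Addr Value Context : Type*}
    (step : Context × Store Addr Value → Context × Store Addr Value → Prop)
    (Shat : Set (Context × ℕ)) (F : Set Context) (σ : Store Addr Value)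
    (Sg : List (Store Addr Value)) (t : ℕ)
    (hdec : List.Chain' (fun x y => y < x) Sg) (hhd : Sg.head? = some σ) :
    (Tstep step (Shat, F, σ, Sg, t)).2.2.2.1 ≠ [] ∧
    List.Chain' (fun x y => y < x) (Tstep step (Shat, F, σ, Sg, t)).2.2.2.1 ∧
    (Tstep step (Shat, F, σ, Sg, t)).2.2.2.1.head? =
      some (Tstep step (Shat, F, σ, Sg, t)).2.2.1 := by
  have hle := le_Tstep_store step (Shat, F, σ, Sg, t)
  have hhd' := List.head?_ite_cons (b := (Tstep step (Shat, F, σ, Sg, t)).2.2.1) hhd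
  rw [Tstep_stack]
  exact ⟨List.ne_nil_of_mem (List.mem_of_mem_head? hhd'),
    List.isChain_gt_ite_cons hle hdec hhd, hhd'⟩

/-- The timestamped widened transfer function preserves the invariant that
`Sg` is nonempty, strictly decreasing with respect to `⊐` from head to tail, and that the
current store is the head of `Sg`. -/
theorem stmt_3 {Addr Value Context : Type*}
    (step : Context × Store Addr Value → Context × Store Addr Value → Prop)
    (hext : ∀ c σ c' σ', step (c, σ) (c', σ') → σ ≤ σ')
    (Shat : Set (Context × ℕ)) (F : Set Context) (σ : Store Addr Value)
    (Sg : List (Store Addr Value)) (t : ℕ)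
    (hne : Sg ≠ []) (hdec : List.Chain' (fun x y => y < x) Sg) (hhd : Sg.head? = some σ) :
    (Tstep step (Shat, F, σ, Sg, t)).2.2.2.1 ≠ [] ∧
    List.Chain' (fun x y => y < x) (Tstep step (Shat, F, σ, Sg, t)).2.2.2.1 ∧
    (Tstep step (Shat, F, σ, Sg, t)).2.2.2.1.head? =
      some (Tstep step (Shat, F, σ, Sg, t)).2.2.1 :=
  stmt_3_general step Shat F σ Sg t hdec hhd
end

section
/- The timestamped widened transfer function is a complete abstraction of the frontier-based widened transfer function: let T denote the (deterministic) timestamped transfer function, W the (deterministic) frontier-based transfer function, and define h(Ŝ,F,σ,Σ,t) := ({(c, nth(reverse Σ, n)) | (c,n) ∈ Ŝ}, F, σ), i.e., each timestamp n is replaced by the store at distance n from the end of Σ. Fix an initial context c₀ and let T₀ := ({(c₀,0)}, {c₀}, ⊥, [⊥], 0) and W₀ := ({(c₀,⊥)}, {c₀}, ⊥). Then for every n ∈ ℕ, h(Tⁿ(T₀)) = Wⁿ(W₀); moreover for all m, n ∈ ℕ, Tⁿ(T₀) = Tᵐ(T₀) if and only if Wⁿ(W₀) = Wᵐ(W₀),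 so the two iteration sequences are order-isomorphic. -/
open Classical

/-- The frontier-based widened transfer function `W`. -/
def Wstep {Addr Value Context : Type*}
    (step : Context × Store Addr Value → Context × Store Addr Value → Prop)
    (cfg : Set (Context × Store Addr Value) × Set Context × Store Addr Value) :
    Set (Context × Store Addr Value) × Set Context × Store Addr Value :=
  let S := cfg.1
  let F := cfg.2.1
  let σ := cfg.2.2
  let I : Set (Context × Store Addr Value) := {p | ∃ c ∈ F, step (c, σ) p}
  let σ' : Store Addr Value := fun a => σ a ∪ ⋃ p ∈ I, p.2 a
  let F' : Set Context := {c' | (∃ σc, (c', σc) ∈ I) ∧ (c', σ') ∉ S}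
  (S ∪ {p | p.1 ∈ F' ∧ p.2 = σ'}, F', σ')

/-- The abstraction map `h`, replacing each timestamp `n` in the seen set by the store
at distance `n` from the end of the store stack `Σ`. -/
def habs {Addr Value Context : Type*}
    (cfg : Set (Context × ℕ) × Set Context × Store Addr Value × List (Store Addr Value) × ℕ) :
    Set (Context × Store Addr Value) × Set Context × Store Addr Value :=
  ({p | ∃ n, (p.1, n) ∈ cfg.1 ∧ cfg.2.2.2.1.reverse[n]? = some p.2}, cfg.2.1, cfg.2.2.1)

/-!
Along the iteration of `T` the reversed stack `Σ` lists the distinct stores reached so far,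
and the timestamp `t` is the position of the current store `σ`. Because the widened store only
grows and bounds the whole stack, a new store `σ' ≠ σ` is not yet on it, so timestamps and
stored stores correspond bijectively. Hence a context is new at timestamp `t'` exactly when it is new at
store `σ'`, which makes `h` commute with one step; and `h` is injective on iterates with the
same stack. If two iterates of `W` agree, the store is constant in between, so `T` leaves the
stack unchanged there and the corresponding iterates of `T` agree as well.
-/

namespace WidenedTransfer

variable {Addr Value Context : Type*}

def decode (Sg : List (Store Addr Value)) (Ŝ : Set (Context × ℕ)) :
    Set (Context × Store Addr Value) :=
  {p | ∃ n, (p.1, n) ∈ Ŝ ∧ Sg.reverse[n]? = some p.2}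

section Decode

variable {Sg : List (Store Addr Value)} {Ŝ : Set (Context × ℕ)}

theorem decode_union (A B : Set (Context × ℕ)) :
    decode Sg (A ∪ B) = decode Sg A ∪ decode Sg B := by
  ext p
  simp [decode, or_and_right, exists_or]

theorem decode_layer {t : ℕ} {σ : Store Addr Value} (F : Set Context)
    (h : Sg.reverse[t]? = some σ) :
    decode Sg {p | p.1 ∈ F ∧ p.2 = t} = {p | p.1 ∈ F ∧ p.2 = σ} := by
  ext ⟨c, τ⟩
  simp only [decode, Set.mem_ofPred_eq]
  constructor
  · rintro ⟨_, ⟨hc, rfl⟩, hτ⟩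
    exact ⟨hc, Option.some_injective _ (hτ.symm.trans h)⟩
  · rintro ⟨hc, rfl⟩
    exact ⟨t, ⟨hc, rfl⟩, h⟩

theorem decode_cons (σ : Store Addr Value) (hŜ : ∀ p ∈ Ŝ, p.2 < Sg.length) :
    decode (σ :: Sg) Ŝ = decode Sg Ŝ := by
  ext ⟨c, τ⟩
  simp only [decode, Set.mem_ofPred_eq, List.reverse_cons]
  refine exists_congr fun n => and_congr_right fun hn => ?_
  rw [List.getElem?_append_left (by simpa using hŜ _ hn)]

theorem mem_decode_iff {t : ℕ} {σ : Store Addr Value} (c : Context) (hnd : Sg.Nodup)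
    (hŜ : ∀ p ∈ Ŝ, p.2 < Sg.length) (h : Sg.reverse[t]? = some σ) :
    (c, σ) ∈ decode Sg Ŝ ↔ (c, t) ∈ Ŝ := by
  refine ⟨fun ⟨n, hn, hσ⟩ => ?_, fun hc => ⟨t, hc, h⟩⟩
  have hlt : n < Sg.reverse.length := by simpa using hŜ _ hn
  rwa [← (List.getElem?_inj hlt (List.nodup_reverse.2 hnd)).1 (hσ.trans h.symm)]

theorem decode_injOn {Ŝ' : Set (Context × ℕ)} (hnd : Sg.Nodup)
    (hŜ : ∀ p ∈ Ŝ, p.2 < Sg.length) (hŜ' : ∀ p ∈ Ŝ', p.2 < Sg.length)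
    (h : decode Sg Ŝ = decode Sg Ŝ') : Ŝ = Ŝ' := by
  ext ⟨c, n⟩
  by_cases hn : n < Sg.reverse.length
  · have hget := List.getElem?_eq_getElem hn
    rw [← mem_decode_iff c hnd hŜ hget, ← mem_decode_iff c hnd hŜ' hget, h]
  · have hn' : Sg.length ≤ n := by simpa using hn
    exact iff_of_false (fun hc => (hŜ _ hc).not_ge hn') (fun hc => (hŜ' _ hc).not_ge hn')

end Decode

abbrev TConfig (Addr Value Context : Type*) :=
  Set (Context × ℕ) × Set Context × Store Addr Value × List (Store Addr Value) × ℕ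

abbrev WConfig (Addr Value Context : Type*) :=
  Set (Context × Store Addr Value) × Set Context × Store Addr Value

variable (step : Context × Store Addr Value → Context × Store Addr Value → Prop)

section Unfold

variable (cfg : TConfig Addr Value Context) (x : WConfig Addr Value Context)

theorem Tstep_seen : (Tstep step cfg).1 =
    cfg.1 ∪ {p | p.1 ∈ (Tstep step cfg).2.1 ∧ p.2 = (Tstep step cfg).2.2.2.2} := rfl

theorem mem_Tstep_frontier (c : Context) : c ∈ (Tstep step cfg).2.1 ↔
    (∃ σc, ∃ c₀ ∈ cfg.2.1, step (c₀, cfg.2.2.1) (c, σc)) ∧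
      (c, (Tstep step cfg).2.2.2.2) ∉ cfg.1 := Iff.rfl

theorem le_Tstep_store : cfg.2.2.1 ≤ (Tstep step cfg).2.2.1 :=
  fun _ => Set.subset_union_left

theorem Tstep_stack_of_eq (h : (Tstep step cfg).2.2.1 = cfg.2.2.1) :
    (Tstep step cfg).2.2.2 = cfg.2.2.2 := by
  simp only [Tstep] at h ⊢
  simp only [if_pos h]

theorem Tstep_stack_of_ne (h : (Tstep step cfg).2.2.1 ≠ cfg.2.2.1) :
    (Tstep step cfg).2.2.2 = ((Tstep step cfg).2.2.1 :: cfg.2.2.2.1, cfg.2.2.2.2 + 1) := by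
  simp only [Tstep] at h ⊢
  simp only [if_neg h]

theorem Wstep_seen : (Wstep step x).1 =
    x.1 ∪ {p | p.1 ∈ (Wstep step x).2.1 ∧ p.2 = (Wstep step x).2.2} := rfl

theorem mem_Wstep_frontier (c : Context) : c ∈ (Wstep step x).2.1 ↔
    (∃ σc, ∃ c₀ ∈ x.2.1, step (c₀, x.2.2) (c, σc)) ∧ (c, (Wstep step x).2.2) ∉ x.1 :=
  Iff.rfl

theorem Wstep_habs_store : (Wstep step (habs cfg)).2.2 = (Tstep step cfg).2.2.1 := rfl

theorem habs_eq : habs cfg = (decode cfg.2.2.2.1 cfg.1, cfg.2.1, cfg.2.2.1) := rfl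

end Unfold

/-- Invariant of the iterates of `Tstep`, written for `cfg = (Ŝ, F, σ, Σ, t)`. -/
structure WellFormed (cfg : TConfig Addr Value Context) : Prop where
  length_stack : cfg.2.2.2.1.length = cfg.2.2.2.2 + 1
  getElem?_reverse_stack : cfg.2.2.2.1.reverse[cfg.2.2.2.2]? = some cfg.2.2.1
  nodup_stack : cfg.2.2.2.1.Nodup
  le_store : ∀ τ ∈ cfg.2.2.2.1, τ ≤ cfg.2.2.1
  timestamp_le : ∀ p ∈ cfg.1, p.2 ≤ cfg.2.2.2.2

variable {step} {cfg : TConfig Addr Value Context}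

theorem WellFormed.timestamp_lt (h : WellFormed cfg) : ∀ p ∈ cfg.1, p.2 < cfg.2.2.2.1.length :=
  fun p hp => h.length_stack ▸ Nat.lt_succ_of_le (h.timestamp_le p hp)

theorem wellFormed_Tstep (h : WellFormed cfg) : WellFormed (Tstep step cfg) := by
  obtain ⟨Ŝ, F, σ, Sg, t⟩ := cfg
  set cfg' := Tstep step (Ŝ, F, σ, Sg, t)
  have hle : σ ≤ cfg'.2.2.1 := le_Tstep_store step (Ŝ, F, σ, Sg, t)
  have htimestamp (ht : t ≤ cfg'.2.2.2.2) : ∀ p ∈ cfg'.1, p.2 ≤ cfg'.2.2.2.2 := by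
    rintro p (hp | ⟨-, hp⟩)
    exacts [(h.timestamp_le p hp).trans ht, hp.le]
  by_cases hσ : cfg'.2.2.1 = σ
  · have hstack : cfg'.2.2.2 = (Sg, t) := Tstep_stack_of_eq step _ hσ
    refine ⟨?_, ?_, ?_, ?_, htimestamp (by rw [hstack])⟩ <;> simp only [hstack, hσ]
    exacts [h.length_stack, h.getElem?_reverse_stack, h.nodup_stack, h.le_store]
  · have hstack : cfg'.2.2.2 = (cfg'.2.2.1 :: Sg, t + 1) := Tstep_stack_of_ne step _ hσ
    have hnew : cfg'.2.2.1 ∉ Sg := fun hmem => hσ (le_antisymm (h.le_store _ hmem) hle)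
    refine ⟨?_, ?_, ?_, ?_, htimestamp (by rw [hstack]; exact t.le_succ)⟩ <;> rw [hstack]
    · simp [h.length_stack]
    · simp [← h.length_stack]
    · exact List.nodup_cons.2 ⟨hnew, h.nodup_stack⟩
    · rintro τ (_ | ⟨_, hτ⟩)
      exacts [le_rfl, (h.le_store τ hτ).trans hle]

theorem wellFormed_Tstep_iterate (h : WellFormed cfg) (n : ℕ) :
    WellFormed ((Tstep step)^[n] cfg) := by
  induction n with
  | zero => exact h
  | succ n ih => exact Function.iterate_succ_apply' (Tstep step) n cfg ▸ wellFormed_Tstep ih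

theorem decode_Tstep_stack (h : WellFormed cfg) :
    decode (Tstep step cfg).2.2.2.1 cfg.1 = decode cfg.2.2.2.1 cfg.1 := by
  by_cases hσ : (Tstep step cfg).2.2.1 = cfg.2.2.1
  · rw [Tstep_stack_of_eq step cfg hσ]
  · rw [Tstep_stack_of_ne step cfg hσ, decode_cons _ h.timestamp_lt]

theorem habs_Tstep (h : WellFormed cfg) : habs (Tstep step cfg) = Wstep step (habs cfg) := by
  have h' := wellFormed_Tstep (step := step) h
  have hdecode := decode_Tstep_stack (step := step) h
  have hfrontier : (Tstep step cfg).2.1 = (Wstep step (habs cfg)).2.1 := by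
    ext c
    rw [mem_Tstep_frontier, mem_Wstep_frontier, Wstep_habs_store, habs_eq]
    dsimp only
    rw [← hdecode,
      mem_decode_iff c h'.nodup_stack (fun p hp => h'.timestamp_lt p (Or.inl hp))
        h'.getElem?_reverse_stack]
  refine Prod.ext ?_ (Prod.ext hfrontier rfl)
  rw [habs_eq, Tstep_seen, Wstep_seen, decode_union, hdecode,
    decode_layer _ h'.getElem?_reverse_stack, hfrontier]
  rfl

theorem habs_Tstep_iterate (h : WellFormed cfg) (n : ℕ) :
    habs ((Tstep step)^[n] cfg) = (Wstep step)^[n] (habs cfg) := by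
  induction n with
  | zero => rfl
  | succ n ih =>
    rw [Function.iterate_succ_apply', Function.iterate_succ_apply', habs_Tstep
      (wellFormed_Tstep_iterate h n), ih]

theorem eq_of_habs_eq {cfg' : TConfig Addr Value Context} (h : WellFormed cfg)
    (h' : WellFormed cfg') (hstack : cfg.2.2.2 = cfg'.2.2.2) (hhabs : habs cfg = habs cfg') :
    cfg = cfg' := by
  obtain ⟨Ŝ, F, σ, Sg, t⟩ := cfg
  obtain ⟨Ŝ', F', σ', Sg', t'⟩ := cfg'
  obtain ⟨rfl, rfl⟩ := Prod.mk.inj hstack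
  simp only [habs_eq, Prod.mk.injEq] at hhabs
  obtain ⟨hseen, rfl, rfl⟩ := hhabs
  obtain rfl := decode_injOn h.nodup_stack h.timestamp_lt h'.timestamp_lt hseen
  rfl

/-- The store grows along the iteration, and `Tstep` changes the stack only when it changes
the store. -/
theorem Tstep_iterate_stack_eq (n m : ℕ) (hnm : n ≤ m)
    (hstore : ((Tstep step)^[n] cfg).2.2.1 = ((Tstep step)^[m] cfg).2.2.1) :
    ((Tstep step)^[n] cfg).2.2.2 = ((Tstep step)^[m] cfg).2.2.2 := by
  have hmono : Monotone fun k => ((Tstep step)^[k] cfg).2.2.1 :=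
    monotone_nat_of_le_succ fun k => by
      simpa only [Function.iterate_succ_apply'] using le_Tstep_store step _
  induction m, hnm using Nat.le_induction with
  | base => rfl
  | succ m hnm ih =>
    have hstore_m : ((Tstep step)^[m + 1] cfg).2.2.1 = ((Tstep step)^[m] cfg).2.2.1 :=
      le_antisymm (hstore ▸ hmono hnm) (hmono m.le_succ)
    rw [ih (hstore.trans hstore_m), Function.iterate_succ_apply']
    rw [Function.iterate_succ_apply'] at hstore_m
    exact (Tstep_stack_of_eq step _ hstore_m).symm

theorem Tstep_iterate_eq_iff (h : WellFormed cfg) (n m : ℕ) :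
    (Tstep step)^[n] cfg = (Tstep step)^[m] cfg ↔
      (Wstep step)^[n] (habs cfg) = (Wstep step)^[m] (habs cfg) := by
  rw [← habs_Tstep_iterate h, ← habs_Tstep_iterate h]
  refine ⟨congrArg habs, fun hW => ?_⟩
  wlog hnm : n ≤ m generalizing n m
  · exact (this m n hW.symm (le_of_not_ge hnm)).symm
  refine eq_of_habs_eq (wellFormed_Tstep_iterate h n) (wellFormed_Tstep_iterate h m) ?_ hW
  exact Tstep_iterate_stack_eq n m hnm (congrArg (fun x => x.2.2) hW)

end WidenedTransfer

theorem stmt_4_general {Addr Value Context : Type*}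
    (step : Context × Store Addr Value → Context × Store Addr Value → Prop)
    (c₀ : Context) :
    (∀ n : ℕ,
      habs ((Tstep step)^[n] ({(c₀, 0)}, {c₀}, (fun _ => ∅), [fun _ => ∅], 0)) =
        (Wstep step)^[n] ({(c₀, fun _ => ∅)}, {c₀}, fun _ => ∅)) ∧
    (∀ m n : ℕ,
      (Tstep step)^[n] ({(c₀, 0)}, {c₀}, (fun _ => ∅), [fun _ => ∅], 0) =
        (Tstep step)^[m] ({(c₀, 0)}, {c₀}, (fun _ => ∅), [fun _ => ∅], 0) ↔
      (Wstep step)^[n] ({(c₀, fun _ => ∅)}, {c₀}, fun _ => ∅) =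
        (Wstep step)^[m] ({(c₀, fun _ => ∅)}, {c₀}, fun _ => ∅)) := by
  set T₀ : WidenedTransfer.TConfig Addr Value Context := ({(c₀, 0)}, {c₀}, (fun _ => ∅), [fun _ => ∅], 0)
  set W₀ : WidenedTransfer.WConfig Addr Value Context := ({(c₀, fun _ => ∅)}, {c₀}, fun _ => ∅)
  have hwf : WidenedTransfer.WellFormed T₀ := ⟨rfl, rfl, List.nodup_singleton _, by simp [T₀], by simp [T₀]⟩
  have hinit : habs T₀ = W₀ := by
    refine Prod.ext (Set.ext fun ⟨c, τ⟩ => ?_) rfl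
    simp [T₀, W₀, habs, eq_comm]
  rw [← hinit]
  exact ⟨WidenedTransfer.habs_Tstep_iterate hwf,
    fun m n => WidenedTransfer.Tstep_iterate_eq_iff hwf n m⟩

/-- The timestamped widened transfer function is a complete abstraction of
the frontier-based widened transfer function: `h` carries every iterate of `T` from its
initial configuration to the corresponding iterate of `W` from its initial
configuration, and iterates of `T` coincide exactly when the corresponding iterates of
`W` do, so the two iteration sequences are order-isomorphic. -/
theorem stmt_4 {Addr Value Context : Type*}
    (step : Context × Store Addr Value → Context × Store Addr Value → Prop)
    (hext : ∀ c σ c' σ', step (c, σ) (c', σ') → σ ≤ σ')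
    (c₀ : Context) :
    (∀ n : ℕ,
      habs ((Tstep step)^[n] ({(c₀, 0)}, {c₀}, (fun _ => ∅), [fun _ => ∅], 0)) =
        (Wstep step)^[n] ({(c₀, fun _ => ∅)}, {c₀}, fun _ => ∅)) ∧
    (∀ m n : ℕ,
      (Tstep step)^[n] ({(c₀, 0)}, {c₀}, (fun _ => ∅), [fun _ => ∅], 0) =
        (Tstep step)^[m] ({(c₀, 0)}, {c₀}, (fun _ => ∅), [fun _ => ∅], 0) ↔
      (Wstep step)^[n] ({(c₀, fun _ => ∅)}, {c₀}, fun _ => ∅) =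
        (Wstep step)^[m] ({(c₀, fun _ => ∅)}, {c₀}, fun _ => ∅)) :=
  stmt_4_general step c₀
end

section
/- Replaying a store-delta log detects change correctly: for every log ξ : List (Addr × Set Value) and store σ, if replay ξ σ = (σ', Δ?), then σ' ≠ σ if and only if Δ?. That is, the replayed store differs from σ exactly when some entry (a,vs) of ξ satisfies ¬ vs ⊆ σ a. -/
/-! Replaying `ξ` on `σ` is the join `σ ⊔ δ` with the store `δ` that `ξ` writes on its own, and a
join `σ ⊔ δ` differs from `σ` exactly when `δ ≰ σ`, which unfolds to some entry of `ξ` not being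
contained in `σ`. -/

/-- Replaying a store-delta log `ξ` on a store `σ` produces the store
`σ' a := σ a ∪ ⋃ {vs | (a,vs) is an entry of ξ}` together with the change flag `Δ?`,
which holds iff some entry `(a,vs)` of `ξ` satisfies `¬ vs ⊆ σ a`. -/
def replay {Addr Value : Type*} (ξ : List (Addr × Set Value)) (σ : Addr → Set Value) :
    (Addr → Set Value) × Prop :=
  (fun a => σ a ∪ ⋃ vs ∈ {vs | (a, vs) ∈ ξ}, vs, ∃ p ∈ ξ, ¬ p.2 ⊆ σ p.1)

def logStore {Addr Value : Type*} (ξ : List (Addr × Set Value)) : Addr → Set Value :=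
  fun a => ⋃ vs ∈ {vs | (a, vs) ∈ ξ}, vs

section

variable {Addr Value : Type*} (ξ : List (Addr × Set Value)) (σ : Addr → Set Value)

theorem replay_fst_eq_sup_logStore : (replay ξ σ).1 = σ ⊔ logStore ξ := rfl

theorem replay_snd_iff : (replay ξ σ).2 ↔ ∃ p ∈ ξ, ¬ p.2 ⊆ σ p.1 := Iff.rfl

theorem logStore_le_iff : logStore ξ ≤ σ ↔ ∀ p ∈ ξ, p.2 ⊆ σ p.1 := by
  simp only [logStore, Pi.le_def, Set.iUnion₂_subset_iff, Set.mem_ofPred_eq, Prod.forall]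

theorem replay_fst_ne_iff : (replay ξ σ).1 ≠ σ ↔ ∃ p ∈ ξ, ¬ p.2 ⊆ σ p.1 := by
  rw [replay_fst_eq_sup_logStore, Ne, sup_eq_left, logStore_le_iff]
  simp only [not_forall, exists_prop]

end

/-- Replaying a store-delta log detects change correctly: the replayed
store differs from `σ` exactly when the change flag holds, i.e. exactly when some entry
`(a,vs)` of `ξ` satisfies `¬ vs ⊆ σ a`. -/
theorem stmt_5 {Addr Value : Type*} (ξ : List (Addr × Set Value)) (σ : Addr → Set Value) :
    ((replay ξ σ).1 ≠ σ ↔ (replay ξ σ).2) ∧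
    ((replay ξ σ).1 ≠ σ ↔ ∃ p ∈ ξ, ¬ p.2 ⊆ σ p.1) :=
  ⟨(replay_fst_ne_iff ξ σ).trans (replay_snd_iff ξ σ).symm, replay_fst_ne_iff ξ σ⟩
end

section
/- Replaying store-delta logs is compatible with concatenation and independent of order: for all logs ξ₁, ξ₂ and every store σ, (replay (ξ₁ ++ ξ₂) σ).1 = (replay ξ₁ σ).1 ⊔ (replay ξ₂ σ).1 and (replay (ξ₁ ++ ξ₂) σ).2 = (replay ξ₁ σ).2 ∨ (replay ξ₂ σ).2; consequently, if ξ and ξ' are permutations of one another (as lists of entries), then replay ξ σ = replay ξ' σ, so the result of combining and replaying the change logs of several steps does not depend on the order of combination. -/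
section
variable {Addr Value : Type*}

theorem replay_append_fst (ξ₁ ξ₂ : List (Addr × Set Value)) (σ : Addr → Set Value) :
    (replay (ξ₁ ++ ξ₂) σ).1 = fun a => (replay ξ₁ σ).1 a ∪ (replay ξ₂ σ).1 a := by
  funext a
  simp only [replay, List.mem_append, Set.ofPred_or, Set.biUnion_union]
  rw [Set.union_union_distrib_left]

theorem replay_append_snd (ξ₁ ξ₂ : List (Addr × Set Value)) (σ : Addr → Set Value) :
    (replay (ξ₁ ++ ξ₂) σ).2 ↔ (replay ξ₁ σ).2 ∨ (replay ξ₂ σ).2 := by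
  simp only [replay, List.mem_append, or_and_right, exists_or]

theorem replay_congr {ξ ξ' : List (Addr × Set Value)} (h : ∀ p, p ∈ ξ ↔ p ∈ ξ')
    (σ : Addr → Set Value) : replay ξ σ = replay ξ' σ := by
  simp only [replay, h]

theorem List.Perm.replay_eq {ξ ξ' : List (Addr × Set Value)} (h : ξ.Perm ξ')
    (σ : Addr → Set Value) : replay ξ σ = replay ξ' σ :=
  replay_congr (fun _ => h.mem_iff) σ

end

/-- Replaying store-delta logs is compatible with concatenation and
independent of order: replaying `ξ₁ ++ ξ₂` yields the (pointwise) join of the two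
replayed stores and the disjunction of the two change flags; consequently replaying is
invariant under permutation of the log. -/
theorem stmt_6 {Addr Value : Type*} :
    (∀ (ξ₁ ξ₂ : List (Addr × Set Value)) (σ : Addr → Set Value),
      (replay (ξ₁ ++ ξ₂) σ).1 = (fun a => (replay ξ₁ σ).1 a ∪ (replay ξ₂ σ).1 a) ∧
      ((replay (ξ₁ ++ ξ₂) σ).2 ↔ ((replay ξ₁ σ).2 ∨ (replay ξ₂ σ).2))) ∧
    (∀ (ξ ξ' : List (Addr × Set Value)) (σ : Addr → Set Value),
      ξ.Perm ξ' → replay ξ σ = replay ξ' σ) :=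
  ⟨fun ξ₁ ξ₂ σ => ⟨replay_append_fst ξ₁ ξ₂ σ, replay_append_snd ξ₁ ξ₂ σ⟩,
    fun _ _ σ h => h.replay_eq σ⟩
end

section
/- Stores of value stacks completely abstract stacks of stores: for every t ∈ ℕ, the map sending a store of value stacks σ̂ that is well-formed at time t to its list of snapshots [snap σ̂ t, snap σ̂ (t−1), …, snap σ̂ 0] is a bijection from {σ̂ : Addr → ValStack | σ̂ is well-formed at time t} onto the set of ⊑-increasing chains of stores of length t+1, i.e., onto {(σ_0, σ_1, …, σ_t) | ∀ s < t, σ_s ⊑ σ_{s+1}} (listed here with σ_t first). In particular, distinct well-formed stores of value stacks have distinct snapshot lists, and every chain of stores arises as the snapshot list of exactly one well-formed store of value stacks. -/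
/-- A value stack: a list of timestamped sets of values. -/
abbrev ValStack (Value : Type*) := List (ℕ × Set Value)

/-- `lookup V s` is the value set of the first entry of `V` (from the head) whose
timestamp is `≤ s`, and `∅` if there is no such entry. -/
def lookup {Value : Type*} : ValStack Value → ℕ → Set Value
  | [], _ => ∅
  | (t', vs) :: V, s => if t' ≤ s then vs else lookup V s

/-- The snapshot of a store of value stacks at time `s`. -/
def snap {Addr Value : Type*} (σ : Addr → ValStack Value) (s : ℕ) : Addr → Set Value :=
  fun a => lookup (σ a) s

/-- A store of value stacks is well-formed at time `t` if, at every address, the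
timestamps are strictly decreasing from head to tail and all `≤ t`, and the value sets
are nonempty and strictly increasing from tail to head (each entry's set strictly
contains the set of the next older entry). -/
def WFat {Addr Value : Type*} (σ : Addr → ValStack Value) (t : ℕ) : Prop :=
  ∀ a, List.Chain' (fun p q => q.1 < p.1 ∧ q.2 ⊂ p.2) (σ a) ∧
    ∀ p ∈ σ a, p.1 ≤ t ∧ p.2.Nonempty

/-!
At a single address, a well-formed value stack is the change-point encoding of a monotone
history `s ↦ σ_s a` on `[0, t]`: it lists, newest first, exactly the pairs `(s, σ_s a)` at which
the history changes, counting the value `∅` before time `0` as its start. `ValStack.ofHistory` computes this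
encoding; `lookup` decodes it back to the history, and re-encoding the history of a well-formed
stack returns the stack, since strictly decreasing timestamps carrying strictly growing nonempty
sets are precisely the change points. These two maps are mutually inverse.
-/

namespace ValStack

variable {Value : Type*}

def Supersedes (p q : ℕ × Set Value) : Prop := q.1 < p.1 ∧ q.2 ⊂ p.2

instance : IsTrans (ℕ × Set Value) Supersedes :=
  ⟨fun _ _ _ hpq hqr => ⟨hqr.1.trans hpq.1, hqr.2.trans hpq.2⟩⟩

def WF (V : ValStack Value) (t : ℕ) : Prop :=
  V.Pairwise Supersedes ∧ ∀ p ∈ V, p.1 ≤ t ∧ p.2.Nonempty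

lemma lookup_eq_empty_or_exists_mem (V : ValStack Value) (s : ℕ) :
    lookup V s = ∅ ∨ ∃ p ∈ V, lookup V s = p.2 := by
  induction V with
  | nil => exact .inl rfl
  | cons p W ih =>
    by_cases hp : p.1 ≤ s
    · exact .inr ⟨p, List.mem_cons_self, by simp [lookup, hp]⟩
    · simp only [lookup, if_neg hp, List.mem_cons, exists_eq_or_imp]
      tauto

lemma lookup_eq_of_forall_le {V : ValStack Value} {t s : ℕ} (hV : ∀ p ∈ V, p.1 ≤ t)
    (hts : t ≤ s) : lookup V s = lookup V t := by
  cases V with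
  | nil => rfl
  | cons p W =>
    have hpt := hV p List.mem_cons_self
    simp [lookup, hpt, hpt.trans hts]

lemma lookup_mono {V : ValStack Value} (hV : V.Pairwise Supersedes) : Monotone (lookup V) := by
  intro s s' hss
  induction V with
  | nil => exact le_rfl
  | cons p W ih =>
    obtain ⟨hp, hW⟩ := List.pairwise_cons.1 hV
    by_cases hps : p.1 ≤ s
    · simp [lookup, hps, hps.trans hss]
    by_cases hps' : p.1 ≤ s'
    · simp only [lookup, if_neg hps, if_pos hps']
      rcases lookup_eq_empty_or_exists_mem W s with h | ⟨q, hq, h⟩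
      · simp [h]
      · exact h ▸ (hp q hq).2.subset
    · simpa [lookup, hps, hps'] using ih hW

open Classical in
noncomputable def ofHistory (f : ℕ → Set Value) : ℕ → ValStack Value
  | 0 => if f 0 = ∅ then [] else [(0, f 0)]
  | t + 1 => if f (t + 1) = f t then ofHistory f t else (t + 1, f (t + 1)) :: ofHistory f t

lemma mem_ofHistory {f : ℕ → Set Value} {t : ℕ} {p : ℕ × Set Value} (hp : p ∈ ofHistory f t) :
    p.1 ≤ t ∧ p.2 = f p.1 := by
  induction t with
  | zero =>
    simp only [ofHistory] at hp
    split_ifs at hp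
    · simp at hp
    · simp_all
  | succ t ih =>
    simp only [ofHistory] at hp
    split_ifs at hp
    · exact (ih hp).imp_left (·.trans t.le_succ)
    · rcases List.mem_cons.1 hp with rfl | hp
      · exact ⟨le_rfl, rfl⟩
      · exact (ih hp).imp_left (·.trans t.le_succ)

lemma ofHistory_wf {f : ℕ → Set Value} (hf : Monotone f) (t : ℕ) : (ofHistory f t).WF t := by
  induction t with
  | zero =>
    simp only [ofHistory]
    split_ifs with h
    · simp [WF]
    · simpa [WF] using Set.nonempty_iff_ne_empty.2 h
  | succ t ih =>
    simp only [ofHistory]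
    split_ifs with h
    · exact ⟨ih.1, fun p hp => (ih.2 p hp).imp_left (·.trans t.le_succ)⟩
    have hft : f t ⊂ f (t + 1) := (hf t.le_succ).lt_of_ne (Ne.symm h)
    refine ⟨List.pairwise_cons.2 ⟨fun q hq => ?_, ih.1⟩, ?_⟩
    · obtain ⟨hqt, hqf⟩ := mem_ofHistory hq
      exact ⟨Nat.lt_succ_of_le hqt, hqf ▸ (hf hqt).trans_lt hft⟩
    · intro p hp
      rcases List.mem_cons.1 hp with rfl | hp
      · exact ⟨le_rfl, Set.nonempty_of_ssubset' hft⟩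
      · exact (ih.2 p hp).imp_left (·.trans t.le_succ)

lemma lookup_ofHistory (f : ℕ → Set Value) {t s : ℕ} (hst : s ≤ t) :
    lookup (ofHistory f t) s = f s := by
  induction t generalizing s with
  | zero =>
    obtain rfl := Nat.le_zero.1 hst
    simp only [ofHistory]
    split_ifs with h <;> simp [lookup, h]
  | succ t ih =>
    simp only [ofHistory]
    rcases hst.eq_or_lt with rfl | hst
    · split_ifs with h
      · rw [lookup_eq_of_forall_le (fun p hp => (mem_ofHistory hp).1) t.le_succ, ih le_rfl, h]
      · simp [lookup]
    · have hst := Nat.le_of_lt_succ hst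
      split_ifs
      · exact ih hst
      · simp [lookup, Nat.not_le.2 (Nat.lt_succ_of_le hst), ih hst]

lemma ofHistory_eq_of_lookup {f : ℕ → Set Value} {t : ℕ} {V : ValStack Value} (hV : V.WF t)
    (hf : ∀ s ≤ t, f s = lookup V s) : ofHistory f t = V := by
  induction t generalizing V with
  | zero =>
    rcases V with _ | ⟨⟨u, X⟩, W⟩
    · simp [ofHistory, hf 0 le_rfl, lookup]
    obtain ⟨hu, hX⟩ := hV.2 _ List.mem_cons_self
    obtain rfl := Nat.le_zero.1 hu
    have hW : W = [] := List.eq_nil_iff_forall_not_mem.2 fun q hq =>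
      Nat.not_lt_zero _ ((List.pairwise_cons.1 hV.1).1 q hq).1
    simp [ofHistory, hf 0 le_rfl, lookup, hW, hX.ne_empty]
  | succ t ih =>
    by_cases hVt : V.WF t
    · have hft : f (t + 1) = f t := by
        rw [hf _ le_rfl, hf _ t.le_succ,
          lookup_eq_of_forall_le (fun p hp => (hVt.2 p hp).1) t.le_succ]
      rw [ofHistory, if_pos hft, ih hVt fun s hs => hf s (hs.trans t.le_succ)]
    rcases V with _ | ⟨⟨u, X⟩, W⟩
    · exact absurd ⟨List.Pairwise.nil, by simp⟩ hVt
    obtain ⟨hhead, hW⟩ := List.pairwise_cons.1 hV.1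
    obtain ⟨hu, hX⟩ := hV.2 _ List.mem_cons_self
    have hut : ¬u ≤ t := by
      refine fun hut => hVt ⟨hV.1, fun p hp => ⟨?_, (hV.2 p hp).2⟩⟩
      rcases List.mem_cons.1 hp with rfl | hp
      exacts [hut, ((hhead p hp).1.trans_le hut).le]
    obtain rfl : u = t + 1 := by omega
    have hWt : WF W t := ⟨hW, fun q hq =>
      ⟨Nat.le_of_lt_succ (hhead q hq).1, (hV.2 q (List.mem_cons_of_mem _ hq)).2⟩⟩
    have hfW : ∀ s ≤ t, f s = lookup W s := fun s hs => by
      simpa [lookup, Nat.not_le.2 (Nat.lt_succ_of_le hs)] using hf s (hs.trans t.le_succ)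
    have hfX : f (t + 1) = X := by simpa [lookup] using hf _ le_rfl
    -- the new head records a genuine change: whatever `W` shows at time `t` is strictly below `X`
    have hft : f (t + 1) ≠ f t := by
      rw [hfX, hfW t le_rfl]
      rcases lookup_eq_empty_or_exists_mem W t with h | ⟨q, hq, h⟩
      · exact h ▸ hX.ne_empty
      · exact h ▸ (hhead q hq).2.ne'
    rw [ofHistory, if_neg hft, ih hWt hfW, hfX]

end ValStack

section Stores

variable {Addr Value : Type*}

lemma wfAt_iff_forall_wf {σ : Addr → ValStack Value} {t : ℕ} :
    WFat σ t ↔ ∀ a, (σ a).WF t :=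
  forall_congr' fun _ => and_congr_left' (List.isChain_iff_pairwise (R := ValStack.Supersedes))

def snapshots (σ : Addr → ValStack Value) (t : ℕ) : List (Addr → Set Value) :=
  (List.range (t + 1)).reverse.map (snap σ)

@[simp]
lemma length_snapshots (σ : Addr → ValStack Value) (t : ℕ) : (snapshots σ t).length = t + 1 := by
  simp [snapshots]

lemma getElem_snapshots (σ : Addr → ValStack Value) {t i : ℕ} (hi : i < (snapshots σ t).length) :
    (snapshots σ t)[i] = snap σ (t - i) := by
  simp [snapshots, List.getElem_reverse]

lemma isChain_snapshots {σ : Addr → ValStack Value} (hσ : ∀ a, (σ a).Pairwise ValStack.Supersedes)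
    (t : ℕ) : (snapshots σ t).IsChain (· ≥ ·) := by
  rw [snapshots, List.isChain_map, List.isChain_reverse, List.isChain_range_succ]
  exact fun s _ a => ValStack.lookup_mono (hσ a) s.le_succ

-- `L` lists `σ_t, …, σ_0`, so `σ_s` is `L[t - s]`.
noncomputable def ofSnapshots (L : List (Addr → Set Value)) (t : ℕ) : Addr → ValStack Value :=
  fun a => ValStack.ofHistory (fun s => L.getD (t - s) ⊥ a) t

lemma ofSnapshots_wfAt {L : List (Addr → Set Value)} {t : ℕ} (hlen : L.length = t + 1)
    (hL : L.IsChain (· ≥ ·)) : WFat (ofSnapshots L t) t := by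
  refine wfAt_iff_forall_wf.2 fun a => ValStack.ofHistory_wf (fun s s' hss => ?_) t
  rw [List.getD_eq_getElem _ _ (by omega), List.getD_eq_getElem _ _ (by omega)]
  exact hL.sortedGE.getElem_ge_getElem_of_le (by omega) a

lemma snapshots_ofSnapshots {L : List (Addr → Set Value)} {t : ℕ} (hlen : L.length = t + 1) :
    snapshots (ofSnapshots L t) t = L := by
  refine List.ext_getElem (by simp [hlen]) fun i hi hi' => ?_
  funext a
  rw [getElem_snapshots, snap, ofSnapshots, ValStack.lookup_ofHistory _ (Nat.sub_le t i),
    Nat.sub_sub_self (by simp at hi; omega), List.getD_eq_getElem _ _ hi']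

lemma ofSnapshots_snapshots {σ : Addr → ValStack Value} {t : ℕ} (hσ : WFat σ t) :
    ofSnapshots (snapshots σ t) t = σ := by
  funext a
  refine ValStack.ofHistory_eq_of_lookup (wfAt_iff_forall_wf.1 hσ a) fun s hs => ?_
  rw [List.getD_eq_getElem _ _ (by simp), getElem_snapshots, Nat.sub_sub_self hs, snap]

end Stores

/-- Stores of value stacks completely abstract stacks of stores: for every
`t`, the map sending a store of value stacks well-formed at time `t` to its list of
snapshots `[snap σ t, snap σ (t-1), …, snap σ 0]` is a bijection onto the set of
`⊑`-increasing chains of stores of length `t+1` (listed with the `t`-th store first). -/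
theorem stmt_10 {Addr Value : Type*} (t : ℕ) :
    Set.BijOn (fun σ : Addr → ValStack Value => (List.range (t + 1)).reverse.map (snap σ))
      {σ | WFat σ t}
      {L : List (Addr → Set Value) |
        L.length = t + 1 ∧ List.Chain' (fun x y => y ≤ x) L} :=
  Set.InvOn.bijOn (f' := fun L => ofSnapshots L t)
    ⟨fun _ hσ => ofSnapshots_snapshots hσ, fun _ hL => snapshots_ofSnapshots hL.1⟩
    (fun σ hσ => ⟨length_snapshots σ t,
      isChain_snapshots (fun a => (wfAt_iff_forall_wf.1 hσ a).1) t⟩)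
    (fun _ hL => ofSnapshots_wfAt hL.1 hL.2)
end
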